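/- arXiv:2209.14688 — 3 statements merged into one kernel-verified Lean document; each statement's English description precedes it below -/
import Mathlib

section
/- For every T-model 𝔠 = ⟨S, σ_V⟩, every n ∈ ℕ, and every formula φ ∈ L_n, the semantics of φ in 𝔠 factors through the terminal sequence: ‖φ‖_𝔠 = ‖φ‖_n ∘ σ_n (as functions S → A). -/
open CategoryTheory

/-- A commutative integral FL-algebra (residuated lattice): a bounded lattice with a
commutative monoid operation `*` whose unit `1` is the top element, together with a
residuated implication `himp` satisfying `a * b ≤ c ↔ b ≤ himp a c`. -/
class FLAlgebra (A : Type) extends Lattice A, BoundedOrder A, CommMonoid A where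
  himp : A → A → A
  residuation : ∀ a b c : A, a * b ≤ c ↔ b ≤ himp a c
  one_eq_top : (1 : A) = ⊤

/-- A (unary) predicate lifting for a `Set`-endofunctor `T` with truth values in `A`:
a natural transformation `Hom(-,A) ⇒ Hom(T(-),A)` where `Hom(-,A)` is the contravariant
hom-functor into `A`. -/
structure PredLifting (T : Type ⥤ Type) (A : Type) where
  app : ∀ S : Type, (S → A) → T.obj S → A
  naturality : ∀ {S S' : Type} (f : S → S') (X : S' → A),
    app S' X ∘ ⇑(T.map (TypeCat.ofHom f)) = app S (X ∘ f)

/-- The functor `T_P = EV_P × T`, where `EV_P` is the constant functor with value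
`Hom(P,A)`. -/
def TP (P A : Type) (T : Type ⥤ Type) : Type ⥤ Type where
  obj S := (P → A) × T.obj S
  map f := TypeCat.ofHom (fun x => (x.1, T.map f x.2))
  map_id X := by ext x <;> simp
  map_comp f g := by ext x <;> simp

/-- Formulas of the many-valued coalgebraic modal language `ML`: constants `c̄` (`const`),
nullary modalities `◻_{λ^p}` (`prop`), binary connectives `∨, ∧, &, →`
(`or`, `and`, `conj`, `imp`), and unary modalities `◻_λ` (`box`), where `Λ` indexes
the predicate liftings. -/
inductive MLFormula (P A Λ : Type) : Type where
  | const : A → MLFormula P A Λ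
  | prop : P → MLFormula P A Λ
  | or : MLFormula P A Λ → MLFormula P A Λ → MLFormula P A Λ
  | and : MLFormula P A Λ → MLFormula P A Λ → MLFormula P A Λ
  | conj : MLFormula P A Λ → MLFormula P A Λ → MLFormula P A Λ
  | imp : MLFormula P A Λ → MLFormula P A Λ → MLFormula P A Λ
  | box : Λ → MLFormula P A Λ → MLFormula P A Λ

namespace MLFormula

/-- The modal rank of a formula: maximal nesting depth of unary modalities `◻_λ`.
`L_n` is the set of formulas of rank ≤ n. -/
def rank {P A Λ : Type} : MLFormula P A Λ → ℕ
  | const _ => 0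
  | prop _ => 0
  | or φ ψ => max (rank φ) (rank ψ)
  | and φ ψ => max (rank φ) (rank ψ)
  | conj φ ψ => max (rank φ) (rank ψ)
  | imp φ ψ => max (rank φ) (rank ψ)
  | box _ φ => rank φ + 1

/-- Application of a substitution `ρ : P → ML`, uniformly replacing each nullary
modality `◻_{λ^p}` by `ρ p`. -/
def subst {P A Λ : Type} (ρ : P → MLFormula P A Λ) : MLFormula P A Λ → MLFormula P A Λ
  | const c => const c
  | prop p => ρ p
  | or φ ψ => or (subst ρ φ) (subst ρ ψ)
  | and φ ψ => and (subst ρ φ) (subst ρ ψ)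
  | conj φ ψ => conj (subst ρ φ) (subst ρ ψ)
  | imp φ ψ => imp (subst ρ φ) (subst ρ ψ)
  | box l φ => box l (subst ρ φ)

end MLFormula

/-- A `T`-model: a `T_P`-coalgebra `⟨S, σ_V⟩` where `σ_V s = (V s, σ s)` for a valuation
`V : S → Hom(P,A)` and a `T`-coalgebra `σ : S → T S`. -/
structure TModel (T : Type ⥤ Type) (P A : Type) where
  S : Type
  V : S → P → A
  σ : S → T.obj S

variable {T : Type ⥤ Type} {P A Λ : Type}

/-- The semantics `‖φ‖_𝔠 : S → A` of a formula in a `T`-model, given an assignment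
`lift` of predicate liftings to the modality indices in `Λ`. -/
def sem [FLAlgebra A] (lift : Λ → PredLifting T A) (M : TModel T P A) :
    MLFormula P A Λ → M.S → A
  | .const c, _ => c
  | .prop p, s => M.V s p
  | .or φ ψ, s => sem lift M φ s ⊔ sem lift M ψ s
  | .and φ ψ, s => sem lift M φ s ⊓ sem lift M ψ s
  | .conj φ ψ, s => sem lift M φ s * sem lift M ψ s
  | .imp φ ψ, s => FLAlgebra.himp (sem lift M φ s) (sem lift M ψ s)
  | .box l φ, s => (lift l).app M.S (sem lift M φ) (M.σ s)

/-- The (pseudo-)terminal sequence: `T_P^0 1̃ = 1̃ = Hom(P,A) × 1` and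
`T_P^{n+1} 1̃ = T_P (T_P^n 1̃)`. -/
def TPn (P A : Type) (T : Type ⥤ Type) : ℕ → Type :=
  Nat.rec ((P → A) × PUnit) (fun _ ih => (P → A) × T.obj ih)

/-- `T_P^{n+1} 1̃` is (definitionally) `T_P` applied to `T_P^n 1̃`. -/
theorem TPn_succ (P A : Type) (T : Type ⥤ Type) (n : ℕ) :
    TPn P A T (n+1) = (TP P A T).obj (TPn P A T n) := rfl

/-- Every element of `T_P^n 1̃` has the form `⟨ν, δ⟩`; this extracts `ν : Hom(P,A)`. -/
def projV (P A : Type) (T : Type ⥤ Type) : (n : ℕ) → TPn P A T n → (P → A)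
  | 0 => fun t => t.1
  | _+1 => fun t => t.1

/-- The `n`-step semantics `‖φ‖_n : T_P^n 1̃ → A` (well-behaved for `rank φ ≤ n`;
the value of a box at level `0` is junk `1`). -/
def stepSem [FLAlgebra A] (lift : Λ → PredLifting T A) :
    MLFormula P A Λ → (n : ℕ) → TPn P A T n → A
  | .const c, _, _ => c
  | .prop p, n, t => projV P A T n t p
  | .or φ ψ, n, t => stepSem lift φ n t ⊔ stepSem lift ψ n t
  | .and φ ψ, n, t => stepSem lift φ n t ⊓ stepSem lift ψ n t
  | .conj φ ψ, n, t => stepSem lift φ n t * stepSem lift ψ n t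
  | .imp φ ψ, n, t => FLAlgebra.himp (stepSem lift φ n t) (stepSem lift ψ n t)
  | .box l φ, n, t =>
    (match (motive := (k : ℕ) → TPn P A T k → A) n with
      | 0 => fun _ => 1
      | m+1 => fun t => (lift l).app (TPn P A T m) (fun u => stepSem lift φ m u) t.2) t

/-- The maps `σ_k : S → T_P^k 1̃`: `σ_0 s = ⟨V s, •⟩` and `σ_{k+1} = T_P σ_k ∘ σ_V`. -/
def sigmaN (M : TModel T P A) : (k : ℕ) → M.S → TPn P A T k
  | 0 => fun s => (M.V s, PUnit.unit)
  | k+1 => fun s => (TP P A T).map (TypeCat.ofHom (sigmaN M k)) (M.V s, M.σ s)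

/-- The canonical map `!'_{T_P^m 1̃} : T_P^m 1̃ → 1̃`, `⟨ν, δ⟩ ↦ ⟨ν, •⟩`. -/
def bangTilde (P A : Type) (T : Type ⥤ Type) : (m : ℕ) → TPn P A T m → TPn P A T 0
  | 0 => fun t => (t.1, PUnit.unit)
  | _+1 => fun t => (t.1, PUnit.unit)

/-- `ι^n := T_P^n ι^0 : T_P^n 1̃ → T_P^{n+1} 1̃`, for a given `ι^0 : 1̃ → T_P 1̃`. -/
def iotaN (P A : Type) (T : Type ⥤ Type) (ι0 : TPn P A T 0 → TPn P A T 1) :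
    (n : ℕ) → TPn P A T n → TPn P A T (n+1)
  | 0 => ι0
  | n+1 => ⇑((TP P A T).map (TypeCat.ofHom (iotaN P A T ι0 n)))

/-- `ι^n_k : T_P^n 1̃ → T_P^k 1̃`: `ι^n_0 ⟨ν,δ⟩ = ⟨ν,•⟩` and
`ι^n_{k+1} = T_P ι^n_k ∘ ι^n`. -/
def iotaNK (P A : Type) (T : Type ⥤ Type) (ι0 : TPn P A T 0 → TPn P A T 1) (n : ℕ) :
    (k : ℕ) → TPn P A T n → TPn P A T k
  | 0 => bangTilde P A T n
  | k+1 => ⇑((TP P A T).map (TypeCat.ofHom (iotaNK P A T ι0 n k))) ∘ iotaN P A T ι0 n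

/-- `T_P^k (!'_{T_P^m 1̃}) : T_P^{m+k} 1̃ → T_P^k 1̃`: the `k`-fold application of the
functor `T_P` to the canonical map `!'_{T_P^m 1̃} : T_P^m 1̃ → 1̃`. -/
def liftedBang (P A : Type) (T : Type ⥤ Type) (m : ℕ) :
    (k : ℕ) → TPn P A T (m + k) → TPn P A T k
  | 0 => bangTilde P A T m
  | k+1 => ⇑((TP P A T).map (TypeCat.ofHom (liftedBang P A T m k)))

/-- The `T`-model `⟨T_P^n 1̃, ι^n⟩`. -/
def terminalModel (P A : Type) (T : Type ⥤ Type) (ι0 : TPn P A T 0 → TPn P A T 1)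
    (n : ℕ) : TModel T P A where
  S := TPn P A T n
  V t := (iotaN P A T ι0 n t).1
  σ t := (iotaN P A T ι0 n t).2

/-- Semantic consequence `Γ ⊩ φ` over all `T`-models. -/
def SemConseq [FLAlgebra A] (lift : Λ → PredLifting T A)
    (Γ : Set (MLFormula P A Λ)) (φ : MLFormula P A Λ) : Prop :=
  ∀ (M : TModel T P A) (s : M.S), (∀ γ ∈ Γ, sem lift M γ s = 1) → sem lift M φ s = 1

/-- Step-`n` semantic consequence `Γ ⊩_n φ` over the terminal sequence. -/
def StepConseq [FLAlgebra A] (lift : Λ → PredLifting T A) (n : ℕ)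
    (Γ : Set (MLFormula P A Λ)) (φ : MLFormula P A Λ) : Prop :=
  ∀ t : TPn P A T n, (∀ γ ∈ Γ, stepSem lift γ n t = 1) → stepSem lift φ n t = 1

/-- Image of a finite set of formulas under a map (with classical decidable equality). -/
noncomputable def fimg {α β : Type} (f : α → β) (s : Finset α) : Finset β :=
  @Finset.image _ _ (Classical.decEq β) f s

/-- The general consequence relation `L`: the least set of consecutions containing
`Ax(𝔸)`, all substitution instances of `Ax(Λ)`, and closed under the monotonicity
rule `Γ ⊢ φ ⟹ ◻_λΓ ⊢ ◻_λφ`. -/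
inductive GenL (AxA AxL : Finset (MLFormula P A Λ) → MLFormula P A Λ → Prop) :
    Finset (MLFormula P A Λ) → MLFormula P A Λ → Prop where
  | axA {Γ φ} : AxA Γ φ → GenL AxA AxL Γ φ
  | axL {Γ φ} (ρ : P → MLFormula P A Λ) : AxL Γ φ →
      GenL AxA AxL (fimg (MLFormula.subst ρ) Γ) (MLFormula.subst ρ φ)
  | mono {Γ φ} (l : Λ) : GenL AxA AxL Γ φ →
      GenL AxA AxL (fimg (MLFormula.box l) Γ) (MLFormula.box l φ)

/-- The step-`n` consequence relations `L_n`: `L_0` is `Ax(𝔸)`-derivability restricted to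
rank-0 consecutions; `L_{n+1}` is the least set of consecutions among `L_{n+1}`-formulas
containing `Ax(𝔸)`-derivations, `n`-substitution instances of `Ax(Λ)`, and closed under
`Γ ⊢_{L_n} φ ⟹ ◻_λΓ ⊢_{L_{n+1}} ◻_λφ`. -/
inductive StepL (AxA AxL : Finset (MLFormula P A Λ) → MLFormula P A Λ → Prop) :
    ℕ → Finset (MLFormula P A Λ) → MLFormula P A Λ → Prop where
  | axA {n Γ φ} : (∀ γ ∈ Γ, MLFormula.rank γ ≤ n) → MLFormula.rank φ ≤ n →
      AxA Γ φ → StepL AxA AxL n Γ φ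
  | axL {n Γ φ} (ρ : P → MLFormula P A Λ) : (∀ p, MLFormula.rank (ρ p) ≤ n) →
      AxL Γ φ →
      StepL AxA AxL (n+1) (fimg (MLFormula.subst ρ) Γ) (MLFormula.subst ρ φ)
  | mono {n Γ φ} (l : Λ) : StepL AxA AxL n Γ φ →
      StepL AxA AxL (n+1) (fimg (MLFormula.box l) Γ) (MLFormula.box l φ)

/-- The `α`-cut of an `A`-valued fuzzy subset `f : X → A`. -/
def alphaCut {A : Type} [FLAlgebra A] {X : Type} (f : X → A) (α : A) : Set X :=
  {x | α ≤ f x}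

/-- `F ⊑_α G` for families of `A`-valued fuzzy subsets of the same universe. -/
def famLe {A : Type} [FLAlgebra A] {X : Type} (F G : Set (X → A)) (α : A) : Prop :=
  (⋂ f ∈ F, alphaCut f α) ⊆ ⋃ g ∈ G, alphaCut g α

/-- A predicate lifting is `α`-preserving if it preserves `⊑_α` between families of
fuzzy subsets. -/
def preservesAt [FLAlgebra A] (lam : PredLifting T A) (α : A) : Prop :=
  ∀ (S : Type) (F G : Set (S → A)), famLe F G α →
    famLe ((fun f => lam.app S f) '' F) ((fun f => lam.app S f) '' G) α

/-- `⊢_{L_n}` is sound w.r.t. `⊩_n`: for finite `Γ ∪ {φ} ⊆ L_n`, `Γ ⊢_{L_n} φ`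
implies `Γ ⊩_n φ`. -/
def SoundAt [FLAlgebra A] (lift : Λ → PredLifting T A)
    (AxA AxL : Finset (MLFormula P A Λ) → MLFormula P A Λ → Prop) (n : ℕ) : Prop :=
  ∀ (Γ : Finset (MLFormula P A Λ)) (φ : MLFormula P A Λ),
    (∀ γ ∈ Γ, MLFormula.rank γ ≤ n) → MLFormula.rank φ ≤ n →
    StepL AxA AxL n Γ φ → StepConseq lift n ↑Γ φ

/-- `⊢_{L_n}` is complete w.r.t. `⊩_n`: for finite `Γ ∪ {φ} ⊆ L_n`, `Γ ⊩_n φ`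
implies `Γ ⊢_{L_n} φ`. -/
def CompleteAt [FLAlgebra A] (lift : Λ → PredLifting T A)
    (AxA AxL : Finset (MLFormula P A Λ) → MLFormula P A Λ → Prop) (n : ℕ) : Prop :=
  ∀ (Γ : Finset (MLFormula P A Λ)) (φ : MLFormula P A Λ),
    (∀ γ ∈ Γ, MLFormula.rank γ ≤ n) → MLFormula.rank φ ≤ n →
    StepConseq lift n ↑Γ φ → StepL AxA AxL n Γ φ

/-- `⊢_L` is one-step sound: for every `n > 0`, soundness of `⊢_{L_{n-1}}` w.r.t.
`⊩_{n-1}` implies soundness of `⊢_{L_n}` w.r.t. `⊩_n`. -/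
def OneStepSound [FLAlgebra A] (lift : Λ → PredLifting T A)
    (AxA AxL : Finset (MLFormula P A Λ) → MLFormula P A Λ → Prop) : Prop :=
  ∀ n : ℕ, SoundAt lift AxA AxL n → SoundAt lift AxA AxL (n+1)

/-- `⊢_L` is one-step complete: for every `n > 0`, completeness of `⊢_{L_{n-1}}` w.r.t.
`⊩_{n-1}` implies completeness of `⊢_{L_n}` w.r.t. `⊩_n`. -/
def OneStepComplete [FLAlgebra A] (lift : Λ → PredLifting T A)
    (AxA AxL : Finset (MLFormula P A Λ) → MLFormula P A Λ → Prop) : Prop :=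
  ∀ n : ℕ, CompleteAt lift AxA AxL n → CompleteAt lift AxA AxL (n+1)

/-! Induction on `φ`. Everything is computed pointwise except `◻_λ`, where `σ_{m+1} = T_P σ_m ∘ σ_V`
turns the claim into naturality of `λ` along `σ_m : S → T_P^m 1̃`. -/

theorem PredLifting.app_map_apply (lam : PredLifting T A) {S S' : Type} (f : S → S')
    (X : S' → A) (x : T.obj S) :
    lam.app S' X (T.map (TypeCat.ofHom f) x) = lam.app S (X ∘ f) x :=
  congrFun (lam.naturality f X) x

theorem projV_sigmaN (M : TModel T P A) (n : ℕ) (s : M.S) :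
    projV P A T n (sigmaN M n s) = M.V s := by
  cases n <;> rfl

theorem stepSem_box_succ [FLAlgebra A] (lift : Λ → PredLifting T A) (l : Λ)
    (φ : MLFormula P A Λ) (m : ℕ) (t : TPn P A T (m + 1)) :
    stepSem lift (.box l φ) (m + 1) t = (lift l).app (TPn P A T m) (stepSem lift φ m) t.2 :=
  rfl

theorem sigmaN_succ_snd (M : TModel T P A) (m : ℕ) (s : M.S) :
    (sigmaN M (m + 1) s).2 = T.map (TypeCat.ofHom (sigmaN M m)) (M.σ s) :=
  rfl

theorem sem_eq_stepSem_comp_sigmaN_general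
    {T : Type ⥤ Type} {P A Λ : Type} [FLAlgebra A]
    (lift : Λ → PredLifting T A)
    (M : TModel T P A) (n : ℕ) (φ : MLFormula P A Λ) (hφ : φ.rank ≤ n) :
    sem lift M φ = stepSem lift φ n ∘ sigmaN M n := by
  induction φ generalizing n with
  | const c => rfl
  | prop p => funext s; exact congrFun (projV_sigmaN M n s).symm p
  | or φ ψ ihφ ihψ | and φ ψ ihφ ihψ | conj φ ψ ihφ ihψ | imp φ ψ ihφ ihψ =>
    obtain ⟨hφ, hψ⟩ := max_le_iff.mp hφ
    funext s
    simp only [sem, stepSem, Function.comp_apply, ihφ n hφ, ihψ n hψ]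
  | box l φ ih =>
    cases n with
    | zero => exact absurd hφ (Nat.not_succ_le_zero _)
    | succ m =>
      funext s
      calc sem lift M (.box l φ) s
          = (lift l).app M.S (stepSem lift φ m ∘ sigmaN M m) (M.σ s) := by
            rw [← ih m (Nat.succ_le_succ_iff.mp hφ)]; rfl
        _ = stepSem lift (.box l φ) (m + 1) (sigmaN M (m + 1) s) := by
            rw [stepSem_box_succ, sigmaN_succ_snd, PredLifting.app_map_apply]

/-- For every `T`-model `𝔠 = ⟨S, σ_V⟩`, every `n ∈ ℕ`, and every formula
`φ ∈ L_n`, the semantics of `φ` in `𝔠` factors through the terminal sequence: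
`‖φ‖_𝔠 = ‖φ‖_n ∘ σ_n` as functions `S → A`. -/
theorem sem_eq_stepSem_comp_sigmaN
    {T : Type ⥤ Type} {P A Λ : Type} [FLAlgebra A]
    (lift : Λ → PredLifting T A)
    (hT : ∃ S : Type, Nonempty (T.obj S))
    (M : TModel T P A) (n : ℕ) (φ : MLFormula P A Λ) (hφ : φ.rank ≤ n) :
    sem lift M φ = stepSem lift φ n ∘ sigmaN M n :=
  sem_eq_stepSem_comp_sigmaN_general lift M n φ hφ
end

section
/- For every n ∈ ℕ and φ ∈ L_n: φ is valid in all T-models (⊩ φ) if and only if φ is step-n valid (⊩_n φ), i.e. ‖φ‖_𝔠(s)=1 for every T-model 𝔠=⟨S,σ_V⟩ and s∈S iff ‖φ‖_n(t)=1 for every t ∈ T_P^n 1̃. -/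
open CategoryTheory

variable {T : Type ⥤ Type} {P A Λ : Type}

/-! Every model maps into the terminal sequence by `σ_n`, and naturality of the predicate
liftings gives `‖φ‖_n ∘ σ_n = ‖φ‖_𝔠` for `φ ∈ L_n`; hence step-`n` validity implies validity.
Conversely, nontriviality of `T` yields some `ι^0 : 1̃ → T_P 1̃` fixing the valuation, and then
`⟨T_P^n 1̃, ι^n⟩` is a model whose `σ_n` is the identity, because each `ι^m` is a coalgebra
morphism `⟨T_P^m 1̃, ι^m⟩ → ⟨T_P^{m+1} 1̃, ι^{m+1}⟩` and `σ_k` commutes with such morphisms. -/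

theorem CategoryTheory.Functor.map_ofHom_map_ofHom (F : Type ⥤ Type) {X Y Z : Type}
    (h : X → Y) (g : Y → Z) (x : F.obj X) :
    F.map (TypeCat.ofHom g) (F.map (TypeCat.ofHom h) x) = F.map (TypeCat.ofHom (g ∘ h)) x :=
  (F.map_comp_apply (TypeCat.ofHom h) (TypeCat.ofHom g) x).symm

def IsModelHom (M N : TModel T P A) (h : M.S → N.S) : Prop :=
  ∀ s, N.V (h s) = M.V s ∧ N.σ (h s) = T.map (TypeCat.ofHom h) (M.σ s)

theorem IsModelHom.sigmaN_apply {M N : TModel T P A} {h : M.S → N.S} (hh : IsModelHom M N h)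
    (k : ℕ) (s : M.S) : sigmaN N k (h s) = sigmaN M k s := by
  induction k generalizing s with
  | zero =>
    show (N.V (h s), PUnit.unit) = (M.V s, PUnit.unit)
    rw [(hh s).1]
  | succ k ih =>
    have hcomp : sigmaN N k ∘ h = sigmaN M k := funext ih
    show ((N.V (h s)), T.map (TypeCat.ofHom (sigmaN N k)) (N.σ (h s))) =
      (M.V s, T.map (TypeCat.ofHom (sigmaN M k)) (M.σ s))
    rw [(hh s).1, (hh s).2, T.map_ofHom_map_ofHom, hcomp]

theorem iotaN_isModelHom (ι0 : TPn P A T 0 → TPn P A T 1) (m : ℕ) :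
    IsModelHom (terminalModel P A T ι0 m) (terminalModel P A T ι0 (m + 1)) (iotaN P A T ι0 m) :=
  fun _ => ⟨rfl, rfl⟩

theorem sigmaN_terminalModel_self (ι0 : TPn P A T 0 → TPn P A T 1)
    (hι0 : ∀ t, (ι0 t).1 = t.1) (n : ℕ) (t : TPn P A T n) :
    sigmaN (terminalModel P A T ι0 n) n t = t := by
  induction n with
  | zero => exact Prod.ext (hι0 t) rfl
  | succ m ih =>
    have hid : sigmaN (terminalModel P A T ι0 (m + 1)) m ∘ iotaN P A T ι0 m = id :=
      funext fun u => ((iotaN_isModelHom ι0 m).sigmaN_apply m u).trans (ih u)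
    obtain ⟨ν, δ⟩ := t
    refine Prod.ext rfl ((T.map_ofHom_map_ofHom (iotaN P A T ι0 m)
      (sigmaN (terminalModel P A T ι0 (m + 1)) m) δ).trans ?_)
    exact (congrArg (fun f => T.map (TypeCat.ofHom f) δ) hid).trans (T.map_id_apply _ δ)

theorem stepSem_sigmaN [FLAlgebra A] (lift : Λ → PredLifting T A) (M : TModel T P A)
    (φ : MLFormula P A Λ) (n : ℕ) (hφ : φ.rank ≤ n) (s : M.S) :
    stepSem lift φ n (sigmaN M n s) = sem lift M φ s := by
  induction φ generalizing n s with
  | const c => rfl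
  | prop p => cases n <;> rfl
  | box l φ ih =>
    rcases n with _ | m
    · simp [MLFormula.rank] at hφ
    have hsem : stepSem lift φ m ∘ sigmaN M m = sem lift M φ :=
      funext (ih m (Nat.le_of_succ_le_succ hφ))
    show (lift l).app _ (stepSem lift φ m) (T.map (TypeCat.ofHom (sigmaN M m)) (M.σ s)) =
      (lift l).app M.S (sem lift M φ) (M.σ s)
    rw [← hsem]
    exact congrFun ((lift l).naturality _ _) _
  | or φ ψ ihφ ihψ | and φ ψ ihφ ihψ | conj φ ψ ihφ ihψ | imp φ ψ ihφ ihψ =>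
    simp only [MLFormula.rank, max_le_iff] at hφ
    simp only [stepSem, sem, ihφ n hφ.1, ihψ n hφ.2]

/-- For every `n ∈ ℕ` and `φ ∈ L_n`: `φ` is valid in all `T`-models (`⊩ φ`)
iff `φ` is step-`n` valid (`⊩_n φ`), i.e. `‖φ‖_𝔠(s) = 1` for every `T`-model `𝔠` and
state `s` iff `‖φ‖_n(t) = 1` for every `t ∈ T_P^n 1̃`. -/
theorem valid_iff_step_valid
    {T : Type ⥤ Type} {P A Λ : Type} [FLAlgebra A]
    (lift : Λ → PredLifting T A)
    (hT : ∃ S : Type, Nonempty (T.obj S))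
    (n : ℕ) (φ : MLFormula P A Λ) (hφ : φ.rank ≤ n) :
    (∀ (M : TModel T P A) (s : M.S), sem lift M φ s = 1) ↔
      (∀ t : TPn P A T n, stepSem lift φ n t = 1) := by
  obtain ⟨S, ⟨d⟩⟩ := hT
  let δ : T.obj (TPn P A T 0) := T.map (TypeCat.ofHom fun _ : S => (fun _ => 1, PUnit.unit)) d
  let ι0 : TPn P A T 0 → TPn P A T 1 := fun t => (t.1, δ)
  constructor
  · intro hvalid t
    have hsem := stepSem_sigmaN lift (terminalModel P A T ι0 n) φ n hφ t
    rw [sigmaN_terminalModel_self ι0 (fun _ => rfl) n t] at hsem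
    exact hsem.trans (hvalid (terminalModel P A T ι0 n) t)
  · intro hstep M s
    rw [← stepSem_sigmaN lift M φ n hφ s]
    exact hstep _
end

section
/- If the general consequence relation ⊢_L is one-step complete (and Ax(𝔸) is sound and complete), then ⊢_L is complete with respect to the semantic consequence relation ⊩: for every finite Γ ∪ {φ} ⊆ ML, Γ ⊩ φ implies Γ ⊢_L φ. -/
open CategoryTheory

variable {T : Type ⥤ Type} {P A Λ : Type}

/-!
Every state `t` of the terminal sequence `T_P^n 1̃` is realised in one `T`-model, the disjoint
union of all `T_P^k 1̃`: the state `⟨n, t⟩` is mapped to `t` by `σ_n`. Since the semantics of a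
formula of rank `≤ n` factors through `σ_n` as the `n`-step semantics, `Γ ⊩ φ` implies
`Γ ⊩_n φ` for any `n` bounding the ranks. Completeness of every `⊢_{L_n}` follows from one-step
completeness by induction on `n`, and every `L_n`-derivation is an `L`-derivation.
-/

/-- States of level `0` carry no successor structure; they get an arbitrary one, which is
where the nontriviality of `T` is needed. -/
noncomputable abbrev terminalSequenceModel (hT : ∃ S : Type, Nonempty (T.obj S)) :
    TModel T P A where
  S := Σ k : ℕ, TPn P A T k
  V x := projV P A T x.1 x.2
  σ
    | x@⟨0, _⟩ => T.map (TypeCat.ofHom fun _ => x) hT.choose_spec.some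
    | ⟨k + 1, t⟩ => T.map (TypeCat.ofHom fun u => (⟨k, u⟩ : Σ k : ℕ, TPn P A T k))
        (t : (TP P A T).obj (TPn P A T k)).2

theorem sigmaN_terminalSequenceModel (hT : ∃ S : Type, Nonempty (T.obj S)) :
    ∀ (k : ℕ) (t : TPn P A T k), sigmaN (terminalSequenceModel hT) k ⟨k, t⟩ = t
  | 0, _ => rfl
  | k + 1, (⟨ν, δ⟩ : (TP P A T).obj (TPn P A T k)) => by
    have hsection : TypeCat.ofHom (fun u => (⟨k, u⟩ : Σ k : ℕ, TPn P A T k)) ≫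
        TypeCat.ofHom (sigmaN (terminalSequenceModel hT) k) = 𝟙 (TPn P A T k) := by
      ext u
      exact sigmaN_terminalSequenceModel hT k u
    change (ν, T.map _ (T.map _ δ)) = (ν, δ)
    rw [← Functor.map_comp_apply, hsection, Functor.map_id_apply]

section Semantics

variable [FLAlgebra A] (lift : Λ → PredLifting T A)

theorem sem_eq_stepSem_sigmaN (M : TModel T P A) (φ : MLFormula P A Λ) :
    ∀ n, φ.rank ≤ n → ∀ s, sem lift M φ s = stepSem lift φ n (sigmaN M n s) := by
  induction φ with
  | const c => intro n _ s; rfl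
  | prop p => intro n _ s; cases n <;> rfl
  | or φ ψ ihφ ihψ | and φ ψ ihφ ihψ | conj φ ψ ihφ ihψ | imp φ ψ ihφ ihψ =>
    intro n h s
    rw [MLFormula.rank, max_le_iff] at h
    simp only [sem, stepSem, ihφ n h.1, ihψ n h.2]
  | box l φ ih =>
    rintro (_ | m) h s
    · exact absurd h (by simp [MLFormula.rank])
    · have hm : φ.rank ≤ m := Nat.le_of_succ_le_succ h
      change (lift l).app M.S (sem lift M φ) (M.σ s) =
        (lift l).app (TPn P A T m) (stepSem lift φ m) (T.map (TypeCat.ofHom (sigmaN M m)) (M.σ s))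
      exact (congrArg (fun X => (lift l).app M.S X (M.σ s)) (funext (ih m hm))).trans
        (congrFun ((lift l).naturality (sigmaN M m) (stepSem lift φ m)) (M.σ s)).symm

theorem SemConseq.stepConseq {Γ : Finset (MLFormula P A Λ)} {φ : MLFormula P A Λ} {n : ℕ}
    (hT : ∃ S : Type, Nonempty (T.obj S))
    (hΓ : ∀ γ ∈ Γ, γ.rank ≤ n) (hφ : φ.rank ≤ n) (h : SemConseq lift ↑Γ φ) :
    StepConseq lift n ↑Γ φ := by
  intro t ht
  have hsem : ∀ ψ : MLFormula P A Λ, ψ.rank ≤ n →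
      sem lift (terminalSequenceModel hT) ψ ⟨n, t⟩ = stepSem lift ψ n t := fun ψ hψ => by
    rw [sem_eq_stepSem_sigmaN lift _ ψ n hψ, sigmaN_terminalSequenceModel]
  rw [← hsem φ hφ]
  exact h _ _ fun γ hγ => (hsem γ (hΓ γ hγ)).trans (ht γ hγ)

theorem completeAt_of_oneStepComplete
    {AxA AxL : Finset (MLFormula P A Λ) → MLFormula P A Λ → Prop}
    (h0 : CompleteAt lift AxA AxL 0) (hstep : OneStepComplete lift AxA AxL) :
    ∀ n, CompleteAt lift AxA AxL n
  | 0 => h0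
  | n + 1 => hstep n (completeAt_of_oneStepComplete h0 hstep n)

end Semantics

theorem StepL.genL {AxA AxL : Finset (MLFormula P A Λ) → MLFormula P A Λ → Prop}
    {n : ℕ} {Γ : Finset (MLFormula P A Λ)} {φ : MLFormula P A Λ}
    (h : StepL AxA AxL n Γ φ) : GenL AxA AxL Γ φ := by
  induction h with
  | axA _ _ h => exact .axA h
  | axL ρ _ h => exact .axL ρ h
  | mono l _ ih => exact .mono l ih

theorem genL_complete_general
    {T : Type ⥤ Type} {P A Λ : Type} [FLAlgebra A]
    (lift : Λ → PredLifting T A)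
    (hT : ∃ S : Type, Nonempty (T.obj S))
    (AxA AxL : Finset (MLFormula P A Λ) → MLFormula P A Λ → Prop)
    (h0complete : CompleteAt lift AxA AxL 0)
    (hone : OneStepComplete lift AxA AxL) :
    ∀ (Γ : Finset (MLFormula P A Λ)) (φ : MLFormula P A Λ),
      SemConseq lift ↑Γ φ → GenL AxA AxL Γ φ := by
  intro Γ φ hsem
  let n := Γ.sup MLFormula.rank ⊔ φ.rank
  have hΓ : ∀ γ ∈ Γ, γ.rank ≤ n := fun γ hγ => le_sup_of_le_left (Finset.le_sup hγ)
  have hφ : φ.rank ≤ n := le_sup_right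
  exact StepL.genL <| completeAt_of_oneStepComplete lift h0complete hone n Γ φ hΓ hφ <|
    hsem.stepConseq lift hT hΓ hφ

/-- If the general consequence relation `⊢_L` is one-step complete (and
`Ax(𝔸)` is sound and complete), then `⊢_L` is complete w.r.t. the semantic consequence
relation `⊩`: for every finite `Γ ∪ {φ} ⊆ ML`, `Γ ⊩ φ` implies `Γ ⊢_L φ`. -/
theorem genL_complete
    {T : Type ⥤ Type} {P A Λ : Type} [FLAlgebra A]
    (lift : Λ → PredLifting T A)
    (hT : ∃ S : Type, Nonempty (T.obj S))
    (AxA AxL : Finset (MLFormula P A Λ) → MLFormula P A Λ → Prop)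
    (hAxL : ∀ Γ φ, AxL Γ φ →
      (∀ γ ∈ Γ, MLFormula.rank γ ≤ 1) ∧ MLFormula.rank φ ≤ 1)
    (h0sound : SoundAt lift AxA AxL 0)
    (h0complete : CompleteAt lift AxA AxL 0)
    (hone : OneStepComplete lift AxA AxL) :
    ∀ (Γ : Finset (MLFormula P A Λ)) (φ : MLFormula P A Λ),
      SemConseq lift ↑Γ φ → GenL AxA AxL Γ φ :=
  genL_complete_general lift hT AxA AxL h0complete hone
end
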